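/- For every b ∈ ℝ, the function g(s) = 2Φ(|b|√s) − 1 is concave on [0, ∞). -/

import Mathlib

open Real MeasureTheory Set Filter

/-- Standard Gaussian density φ(z) = (1/√(2π)) e^{−z²/2}. -/
noncomputable def gaussPdf (z : ℝ) : ℝ := (1 / Real.sqrt (2 * π)) * Real.exp (-z ^ 2 / 2)

/-- Standard Gaussian distribution function Φ(y) = ∫_{−∞}^y φ(z) dz. -/
noncomputable def gaussCdf (y : ℝ) : ℝ := ∫ z in Set.Iio y, gaussPdf z

/-- ψ_t(u) = (e^{−b²u/2}/(π√(u(t−u)))) · [ e^{−b²(t−u)/2}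
      + (b/2)·√(2π(t−u)) · (2Φ(b√(t−u)) − 1) ]. -/
noncomputable def psi (b t u : ℝ) : ℝ :=
  (Real.exp (-b ^ 2 * u / 2) / (π * Real.sqrt (u * (t - u)))) *
    (Real.exp (-b ^ 2 * (t - u) / 2) +
      (b / 2) * Real.sqrt (2 * π * (t - u)) *
        (2 * gaussCdf (b * Real.sqrt (t - u)) - 1))

/-- Inverse Gaussian first-passage density f_{τ₁}(t) = (|a−x|/t^{3/2}) φ((a+bt−x)/√t). -/
noncomputable def invGaussPdf (a x b t : ℝ) : ℝ :=
  (|a - x| / t ^ ((3 : ℝ) / 2)) * gaussPdf ((a + b * t - x) / Real.sqrt t)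

/-!
Φ is increasing, and it is concave on `[0, ∞)` because its derivative φ decreases there.
Since `s ↦ |b| √s` is concave and maps `[0, ∞)` into itself, the composition `Φ(|b| √s)` is
concave.
-/

theorem ConcaveOn.comp_of_mapsTo {𝕜 E α β : Type*} [Semiring 𝕜] [PartialOrder 𝕜]
    [AddCommMonoid E] [AddCommMonoid α] [PartialOrder α] [AddCommMonoid β] [PartialOrder β]
    [SMul 𝕜 E] [SMul 𝕜 α] [SMul 𝕜 β] {s : Set E} {t : Set β} {f : E → β} {g : β → α}
    (hg : ConcaveOn 𝕜 t g) (hg' : MonotoneOn g t) (hf : ConcaveOn 𝕜 s f) (hst : MapsTo f s t) :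
    ConcaveOn 𝕜 s (g ∘ f) :=
  ⟨hf.1, fun _ hx _ hy _ _ ha hb hab =>
    (hg.2 (hst hx) (hst hy) ha hb hab).trans <|
      hg' (hg.1 (hst hx) (hst hy) ha hb hab) (hst <| hf.1 hx hy ha hb hab) (hf.2 hx hy ha hb hab)⟩

lemma continuous_gaussPdf : Continuous gaussPdf := by
  unfold gaussPdf
  fun_prop

lemma gaussPdf_nonneg (z : ℝ) : 0 ≤ gaussPdf z := by
  unfold gaussPdf
  positivity

lemma antitoneOn_gaussPdf : AntitoneOn gaussPdf (Ici 0) := by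
  intro x hx y _ hxy
  rw [mem_Ici] at hx
  unfold gaussPdf
  gcongr

lemma integrable_gaussPdf : Integrable gaussPdf := by
  refine ((integrable_exp_neg_mul_sq (b := 1 / 2) (by norm_num)).const_mul
    (1 / √(2 * π))).congr (ae_of_all _ fun z => ?_)
  simp only [gaussPdf]
  ring_nf

lemma gaussCdf_eq_gaussCdf_zero_add (y : ℝ) :
    gaussCdf y = gaussCdf 0 + ∫ z in (0 : ℝ)..y, gaussPdf z := by
  rw [← intervalIntegral.integral_Iic_sub_Iic integrable_gaussPdf.integrableOn
    integrable_gaussPdf.integrableOn]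
  simp only [gaussCdf, integral_Iic_eq_integral_Iio]
  ring

lemma hasDerivAt_gaussCdf (y : ℝ) : HasDerivAt gaussCdf (gaussPdf y) y := by
  rw [funext gaussCdf_eq_gaussCdf_zero_add]
  exact ((continuous_gaussPdf.integral_hasStrictDerivAt 0 y).hasDerivAt).const_add _

lemma monotone_gaussCdf : Monotone gaussCdf :=
  monotone_of_hasDerivAt_nonneg hasDerivAt_gaussCdf gaussPdf_nonneg

lemma concaveOn_gaussCdf : ConcaveOn ℝ (Ici 0) gaussCdf := by
  have hdiff : Differentiable ℝ gaussCdf := fun y => (hasDerivAt_gaussCdf y).differentiableAt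
  refine AntitoneOn.concaveOn_of_deriv (convex_Ici 0) hdiff.continuous.continuousOn
    hdiff.differentiableOn ?_
  rw [interior_Ici, funext fun y => (hasDerivAt_gaussCdf y).deriv]
  exact antitoneOn_gaussPdf.mono Ioi_subset_Ici_self

lemma concaveOn_const_mul_sqrt {c : ℝ} (hc : 0 ≤ c) :
    ConcaveOn ℝ (Ici 0) fun s => c * √s :=
  strictConcaveOn_sqrt.concaveOn.smul hc

theorem stmt6 (b : ℝ) :
    ConcaveOn ℝ (Set.Ici 0) (fun s => 2 * gaussCdf (|b| * Real.sqrt s) - 1) := by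
  have hcomp : ConcaveOn ℝ (Ici 0) (gaussCdf ∘ fun s => |b| * √s) :=
    concaveOn_gaussCdf.comp_of_mapsTo (monotone_gaussCdf.monotoneOn _)
      (concaveOn_const_mul_sqrt (abs_nonneg b))
      fun s _ => mul_nonneg (abs_nonneg b) (sqrt_nonneg s)
  refine ((hcomp.smul zero_le_two).add_const (-1)).congr fun s _ => ?_
  simp only [Pi.add_apply, Function.comp_apply, smul_eq_mul]
  ring
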